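/- Suppose a symmetric positive semi-definite d×d matrix Σ̂ satisfies p^T Σ̂ p ≥ κ‖p‖_2^2 for all p in the cone {p : ‖p_{S^c}‖_1 ≤ 3‖p_S‖_1} where |S| ≤ s. Let β̂ minimize ‖β‖_1 subject to ‖ξ - Σ̂β‖_∞ ≤ λ, where ξ ∈ R^d and β* is supported on S with ‖ξ - Σ̂β*‖_∞ ≤ λ. Then δ = β̂ - β* lies in the cone, and ‖δ‖_2 ≤ 4λ√s/κ and ‖δ‖_1 ≤ 8λ s/κ. -/

import Mathlib

/-!
Since `β*` is feasible, minimality of `β̂` gives `‖β̂‖₁ ≤ ‖β*‖₁`; as `β*` vanishes off `S`, this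
forces `‖δ_{Sᶜ}‖₁ ≤ ‖δ_S‖₁`, in particular `δ` lies in the cone. Both points being feasible,
`‖Σ̂δ‖_∞ ≤ 2λ`. Restricted eigenvalues, Hölder and Cauchy–Schwarz on `S` then give
`κ‖δ‖₂² ≤ δᵀΣ̂δ ≤ 2λ‖δ‖₁ ≤ 4λ‖δ_S‖₁ ≤ 4λ√s‖δ‖₂`.
-/

open Matrix Finset

variable {ι : Type*} [Fintype ι]

lemma sum_compl_abs_sub_le_sum_abs_sub [DecidableEq ι] {S : Finset ι} {x y : ι → ℝ}
    (hy : ∀ i ∉ S, y i = 0) (hxy : ∑ i, |x i| ≤ ∑ i, |y i|) :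
    ∑ i ∈ Sᶜ, |x i - y i| ≤ ∑ i ∈ S, |x i - y i| := by
  have hoff : ∑ i ∈ Sᶜ, |x i - y i| = ∑ i ∈ Sᶜ, |x i| :=
    sum_congr rfl fun i hi => by rw [hy i (mem_compl.mp hi), sub_zero]
  have hy_off : ∑ i ∈ Sᶜ, |y i| = 0 :=
    sum_eq_zero fun i hi => by rw [hy i (mem_compl.mp hi), abs_zero]
  have hon : ∑ i ∈ S, |y i| ≤ ∑ i ∈ S, |x i| + ∑ i ∈ S, |x i - y i| := by
    rw [← sum_add_distrib]
    exact sum_le_sum fun i _ => by simpa using abs_sub (x i) (x i - y i)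
  rw [← sum_add_sum_compl S] at hxy
  rw [← sum_add_sum_compl S fun i => |y i|] at hxy
  linarith

lemma dotProduct_le_sum_abs_mul {x v : ι → ℝ} {c : ℝ} (hv : ∀ i, |v i| ≤ c) :
    x ⬝ᵥ v ≤ (∑ i, |x i|) * c := by
  rw [dotProduct, sum_mul]
  refine sum_le_sum fun i _ => ?_
  calc x i * v i ≤ |x i| * |v i| := by rw [← abs_mul]; exact le_abs_self _
    _ ≤ |x i| * c := mul_le_mul_of_nonneg_left (hv i) (abs_nonneg _)

lemma sum_abs_le_sqrt_card_mul_sqrt_sum_sq (S : Finset ι) (x : ι → ℝ) :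
    ∑ i ∈ S, |x i| ≤ √(#S : ℝ) * √(∑ i, x i ^ 2) := by
  have hsq : ∑ i ∈ S, |x i| ^ 2 ≤ ∑ i, x i ^ 2 := by
    simp only [sq_abs]
    exact sum_le_sum_of_subset_of_nonneg (subset_univ S) fun i _ _ => sq_nonneg _
  rw [← Real.sqrt_mul (Nat.cast_nonneg _), Real.le_sqrt (sum_nonneg fun i _ => abs_nonneg _)
    (by positivity)]
  exact sq_sum_le_card_mul_sum_sq.trans (mul_le_mul_of_nonneg_left hsq (Nat.cast_nonneg _))

section RestrictedEigenvalue

variable [DecidableEq ι] {A : Matrix ι ι ℝ} {S : Finset ι} {δ : ι → ℝ} {κ μ : ℝ}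

lemma sum_abs_le_two_mul_sqrt_card_mul_sqrt_sum_sq
    (hcone : ∑ i ∈ Sᶜ, |δ i| ≤ ∑ i ∈ S, |δ i|) :
    ∑ i, |δ i| ≤ 2 * √(#S : ℝ) * √(∑ i, δ i ^ 2) := by
  rw [← sum_add_sum_compl S]
  linarith [sum_abs_le_sqrt_card_mul_sqrt_sum_sq S δ]

lemma sqrt_sum_sq_le_of_restrictedEigenvalue (hκ : 0 < κ) (hμ : 0 ≤ μ)
    (hcone : ∑ i ∈ Sᶜ, |δ i| ≤ ∑ i ∈ S, |δ i|) (hRE : κ * ∑ i, δ i ^ 2 ≤ δ ⬝ᵥ A *ᵥ δ)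
    (hsup : ∀ j, |(A *ᵥ δ) j| ≤ μ) :
    √(∑ i, δ i ^ 2) ≤ 2 * μ * √(#S : ℝ) / κ := by
  set N := √(∑ i, δ i ^ 2)
  have hN : 0 ≤ N := Real.sqrt_nonneg _
  have hkey : κ * N ^ 2 ≤ (2 * μ * √(#S : ℝ)) * N :=
    calc κ * N ^ 2 = κ * ∑ i, δ i ^ 2 := by
          rw [Real.sq_sqrt (sum_nonneg fun i _ => sq_nonneg _)]
      _ ≤ (∑ i, |δ i|) * μ := hRE.trans (dotProduct_le_sum_abs_mul hsup)
      _ ≤ (2 * √(#S : ℝ) * N) * μ :=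
          mul_le_mul_of_nonneg_right (sum_abs_le_two_mul_sqrt_card_mul_sqrt_sum_sq hcone) hμ
      _ = (2 * μ * √(#S : ℝ)) * N := by ring
  rcases hN.eq_or_lt with h | h
  · rw [← h]; positivity
  · rw [le_div_iff₀ hκ]
    nlinarith

lemma sum_abs_le_of_restrictedEigenvalue (hκ : 0 < κ) (hμ : 0 ≤ μ)
    (hcone : ∑ i ∈ Sᶜ, |δ i| ≤ ∑ i ∈ S, |δ i|) (hRE : κ * ∑ i, δ i ^ 2 ≤ δ ⬝ᵥ A *ᵥ δ)
    (hsup : ∀ j, |(A *ᵥ δ) j| ≤ μ) :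
    ∑ i, |δ i| ≤ 4 * μ * #S / κ :=
  calc ∑ i, |δ i| ≤ 2 * √(#S : ℝ) * √(∑ i, δ i ^ 2) :=
        sum_abs_le_two_mul_sqrt_card_mul_sqrt_sum_sq hcone
    _ ≤ 2 * √(#S : ℝ) * (2 * μ * √(#S : ℝ) / κ) := by
        gcongr; exact sqrt_sum_sq_le_of_restrictedEigenvalue hκ hμ hcone hRE hsup
    _ = 4 * μ * (√(#S : ℝ) * √(#S : ℝ)) / κ := by ring
    _ = 4 * μ * #S / κ := by rw [Real.mul_self_sqrt (Nat.cast_nonneg _)]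

end RestrictedEigenvalue

theorem stmt_17_general (d s : ℕ) (κ lam : ℝ) (hκ : 0 < κ) (hlam : 0 < lam)
    (Shat : Matrix (Fin d) (Fin d) ℝ)
    (S : Finset (Fin d)) (hS : S.card ≤ s)
    (hRE : ∀ p : Fin d → ℝ, (∑ i ∈ Sᶜ, |p i| ≤ 3 * ∑ i ∈ S, |p i|) →
      κ * ∑ i, p i ^ 2 ≤ p ⬝ᵥ Shat.mulVec p)
    (ξ βstar βhat : Fin d → ℝ)
    (hsupp : ∀ i ∉ S, βstar i = 0)
    (hfeasStar : ∀ j, |ξ j - Shat.mulVec βstar j| ≤ lam)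
    (hfeasHat : ∀ j, |ξ j - Shat.mulVec βhat j| ≤ lam)
    (hmin : ∀ β : Fin d → ℝ, (∀ j, |ξ j - Shat.mulVec β j| ≤ lam) →
      ∑ i, |βhat i| ≤ ∑ i, |β i|) :
    (∑ i ∈ Sᶜ, |βhat i - βstar i| ≤ 3 * ∑ i ∈ S, |βhat i - βstar i|) ∧
    Real.sqrt (∑ i, (βhat i - βstar i) ^ 2) ≤ 4 * lam * Real.sqrt s / κ ∧
    ∑ i, |βhat i - βstar i| ≤ 8 * lam * s / κ := by
  set δ := βhat - βstar
  have hcone : ∑ i ∈ Sᶜ, |δ i| ≤ ∑ i ∈ S, |δ i| :=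
    sum_compl_abs_sub_le_sum_abs_sub hsupp (hmin βstar hfeasStar)
  have hcone3 : ∑ i ∈ Sᶜ, |δ i| ≤ 3 * ∑ i ∈ S, |δ i| := by
    linarith [sum_nonneg fun i (_ : i ∈ S) => abs_nonneg (δ i)]
  have hsup : ∀ j, |(Shat *ᵥ δ) j| ≤ 2 * lam := fun j => by
    rw [mulVec_sub, Pi.sub_apply, ← sub_sub_sub_cancel_left _ _ (ξ j)]
    linarith [abs_sub (ξ j - (Shat *ᵥ βstar) j) (ξ j - (Shat *ᵥ βhat) j), hfeasStar j, hfeasHat j]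
  have hμ : 0 ≤ 2 * lam := by positivity
  have hs : (#S : ℝ) ≤ s := Nat.cast_le.mpr hS
  refine ⟨hcone3, ?_, ?_⟩
  · calc √(∑ i, δ i ^ 2) ≤ 2 * (2 * lam) * √(#S : ℝ) / κ :=
          sqrt_sum_sq_le_of_restrictedEigenvalue hκ hμ hcone (hRE δ hcone3) hsup
      _ ≤ 4 * lam * √(s : ℝ) / κ := by rw [← mul_assoc, show (2 : ℝ) * 2 = 4 by norm_num]; gcongr
  · calc ∑ i, |δ i| ≤ 4 * (2 * lam) * #S / κ :=
          sum_abs_le_of_restrictedEigenvalue hκ hμ hcone (hRE δ hcone3) hsup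
      _ ≤ 8 * lam * s / κ := by rw [← mul_assoc, show (4 : ℝ) * 2 = 8 by norm_num]; gcongr

/-- Dantzig-selector rates under the restricted eigenvalue condition: if `β̂` has
minimal `ℓ₁` norm among `β` with `‖ξ - Σ̂β‖_∞ ≤ λ`, and `β*` is `S`-supported and
feasible, then `δ = β̂ - β*` lies in the cone, `‖δ‖₂ ≤ 4λ√s/κ` and `‖δ‖₁ ≤ 8λs/κ`. -/
theorem stmt_17 (d s : ℕ) (κ lam : ℝ) (hκ : 0 < κ) (hlam : 0 < lam)
    (Shat : Matrix (Fin d) (Fin d) ℝ) (hsymm : Shat.IsSymm) (hpsd : Shat.PosSemidef)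
    (S : Finset (Fin d)) (hS : S.card ≤ s)
    (hRE : ∀ p : Fin d → ℝ, (∑ i ∈ Sᶜ, |p i| ≤ 3 * ∑ i ∈ S, |p i|) →
      κ * ∑ i, p i ^ 2 ≤ p ⬝ᵥ Shat.mulVec p)
    (ξ βstar βhat : Fin d → ℝ)
    (hsupp : ∀ i ∉ S, βstar i = 0)
    (hfeasStar : ∀ j, |ξ j - Shat.mulVec βstar j| ≤ lam)
    (hfeasHat : ∀ j, |ξ j - Shat.mulVec βhat j| ≤ lam)
    (hmin : ∀ β : Fin d → ℝ, (∀ j, |ξ j - Shat.mulVec β j| ≤ lam) →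
      ∑ i, |βhat i| ≤ ∑ i, |β i|) :
    (∑ i ∈ Sᶜ, |βhat i - βstar i| ≤ 3 * ∑ i ∈ S, |βhat i - βstar i|) ∧
    Real.sqrt (∑ i, (βhat i - βstar i) ^ 2) ≤ 4 * lam * Real.sqrt s / κ ∧
    ∑ i, |βhat i - βstar i| ≤ 8 * lam * s / κ :=
  stmt_17_general d s κ lam hκ hlam Shat S hS hRE ξ βstar βhat hsupp hfeasStar hfeasHat hmin
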